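/- arXiv:2209.05018 — 6 statements merged into one kernel-verified Lean document; each statement's English description precedes it below -/
import Mathlib

section
/- Let R be a commutative ring and α ∈ R an element that is not a zero divisor and such that the ideal αR is primary. Then for every positive integer n, the ideal αⁿR is primary. -/
/-!
If `αⁿ ∣ a b` with `b ∉ √(αR)`, then `α ∣ a` because `αR` is primary, and cancelling the
regular element `α` from `α a' b = α · αⁿ⁻¹ c` gives `αⁿ⁻¹ ∣ a' b`; by induction `αⁿ ∣ a`.
Since moreover `√(αⁿR) = √(αR)`, this is exactly the primary condition for `αⁿR`.
-/

open scoped nonZeroDivisors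

namespace Ideal

variable {R : Type*} [CommRing R] {α : R}

theorem pow_dvd_of_pow_dvd_mul_of_notMem_radical (hα : α ∈ R⁰) (hprim : (span {α}).IsPrimary)
    {b : R} (hb : b ∉ (span {α}).radical) {n : ℕ} {a : R} (hab : α ^ n ∣ a * b) : α ^ n ∣ a := by
  induction n generalizing a with
  | zero => exact (pow_zero α).symm ▸ one_dvd a
  | succ n ih =>
    have hα_dvd : α ∣ a * b := (dvd_pow_self α n.succ_ne_zero).trans hab
    obtain ⟨a', rfl⟩ : α ∣ a := by
      simpa only [mem_span_singleton, hb, or_false] using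
        (isPrimary_iff.mp hprim).2 (mem_span_singleton.mpr hα_dvd)
    rw [pow_succ', mul_assoc, dvd_cancel_left_mem_nonZeroDivisors hα] at hab
    rw [pow_succ']
    exact mul_dvd_mul_left α (ih hab)

theorem radical_span_singleton_pow (α : R) {n : ℕ} (hn : n ≠ 0) :
    (span {α ^ n}).radical = (span {α}).radical := by
  rw [← span_singleton_pow, radical_pow _ hn]

theorem IsPrimary.span_singleton_pow (hα : α ∈ R⁰) (hprim : (span {α}).IsPrimary) {n : ℕ}
    (hn : n ≠ 0) : (span {α ^ n}).IsPrimary := by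
  refine isPrimary_iff.mpr ⟨fun htop => hprim.ne_top (top_le_iff.mp ?_), fun {a b} hab => ?_⟩
  · exact htop ▸ span_singleton_le_span_singleton.mpr (dvd_pow_self α hn)
  rw [radical_span_singleton_pow α hn, mem_span_singleton]
  by_cases hb : b ∈ (span {α}).radical
  · exact .inr hb
  · exact .inl (pow_dvd_of_pow_dvd_mul_of_notMem_radical hα hprim hb (mem_span_singleton.mp hab))

end Ideal

/-- If `α` is a non-zero-divisor in a commutative ring `R` and the ideal `αR` is
primary, then for every positive integer `n` the ideal `αⁿR` is primary. -/
theorem stmt_0 {R : Type*} [CommRing R] (α : R)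
    (hnzd : α ∈ nonZeroDivisors R)
    (hprim : (Ideal.span {α}).IsPrimary) :
    ∀ n : ℕ, 0 < n → (Ideal.span {α ^ n}).IsPrimary :=
  fun _ hn => hprim.span_singleton_pow hnzd hn.ne'
end

section
/- Let k be a field and f ∈ k[[x₁,…,xₙ]] a nonzero formal power series. If k is infinite, then there exists a continuous k-algebra homomorphism k[[x₁,…,xₙ]] → k[[t]] (sending each xᵢ to a multiple aᵢt of t) under which the image of f is nonzero. -/
/-!
The coefficient of `tᵐ` in `substLine a f` is the value at `a` of the degree-`m` homogeneous
part of `f`, a polynomial. If `m` is the degree of a nonzero coefficient of `f`, this polynomial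
is nonzero, and a nonzero polynomial over an infinite field does not vanish everywhere.
-/

/-- The continuous `k`-algebra homomorphism `k[[x₁,…,xₙ]] → k[[t]]` determined by the
substitution `xᵢ ↦ aᵢ·t`, described coefficientwise: the coefficient of `tᵐ` in the image
of `f` is `∑_{|d| = m} (coeff_d f) · ∏ᵢ aᵢ^{dᵢ}`. -/
noncomputable def substLine {k : Type*} [CommRing k] {n : ℕ} (a : Fin n → k)
    (f : MvPowerSeries (Fin n) k) : PowerSeries k :=
  PowerSeries.mk fun m =>
    ∑ d ∈ Finset.finsuppAntidiag (Finset.univ : Finset (Fin n)) m,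
      (MvPowerSeries.coeff d f) * ∏ i, a i ^ d i

namespace MvPowerSeries

variable {σ R : Type*} [Fintype σ] [DecidableEq σ] [CommSemiring R]

noncomputable def homogeneousPart (m : ℕ) (f : MvPowerSeries σ R) : MvPolynomial σ R :=
  ∑ d ∈ Finset.finsuppAntidiag Finset.univ m, MvPolynomial.monomial d (coeff d f)

theorem coeff_homogeneousPart_degree (f : MvPowerSeries σ R) (d : σ →₀ ℕ) :
    (homogeneousPart d.degree f).coeff d = coeff d f := by
  have hd : d ∈ Finset.finsuppAntidiag Finset.univ d.degree := by
    simp [Finset.mem_finsuppAntidiag, Finsupp.degree_eq_sum]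
  rw [homogeneousPart, MvPolynomial.coeff_sum, Finset.sum_eq_single_of_mem d hd]
  · rw [MvPolynomial.coeff_monomial, if_pos rfl]
  · intro e _ he
    rw [MvPolynomial.coeff_monomial, if_neg he]

theorem homogeneousPart_degree_ne_zero {f : MvPowerSeries σ R} {d : σ →₀ ℕ}
    (hd : coeff d f ≠ 0) : homogeneousPart d.degree f ≠ 0 := fun h ↦
  hd <| by rw [← coeff_homogeneousPart_degree, h, MvPolynomial.coeff_zero]

end MvPowerSeries

theorem MvPolynomial.exists_eval_ne_zero {σ R : Type*} [CommRing R] [IsDomain R] [Infinite R]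
    {p : MvPolynomial σ R} (hp : p ≠ 0) : ∃ x, eval x p ≠ 0 := by
  by_contra! h
  exact hp (funext fun x ↦ by simp [h x])

theorem coeff_substLine {k : Type*} [CommRing k] {n : ℕ} (a : Fin n → k)
    (f : MvPowerSeries (Fin n) k) (m : ℕ) :
    PowerSeries.coeff m (substLine a f) =
      MvPolynomial.eval a (MvPowerSeries.homogeneousPart m f) := by
  simp only [substLine, PowerSeries.coeff_mk, MvPowerSeries.homogeneousPart,
    MvPolynomial.eval_sum, MvPolynomial.eval_monomial]
  refine Finset.sum_congr rfl fun d _ ↦ ?_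
  rw [Finsupp.prod_fintype _ _ fun i ↦ pow_zero (a i)]

/-- Let `k` be an infinite field and `f ∈ k[[x₁,…,xₙ]]` a nonzero formal
power series.  Then there is a continuous `k`-algebra homomorphism
`k[[x₁,…,xₙ]] → k[[t]]`, sending each `xᵢ` to a multiple `aᵢ·t` of `t`, under which the
image of `f` is nonzero. -/
theorem stmt_4 {k : Type*} [Field k] [Infinite k] {n : ℕ}
    (f : MvPowerSeries (Fin n) k) (hf : f ≠ 0) :
    ∃ a : Fin n → k, substLine a f ≠ 0 := by
  obtain ⟨d, hd⟩ := (MvPowerSeries.ne_zero_iff_exists_coeff_ne_zero f).mp hf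
  obtain ⟨a, ha⟩ :=
    MvPolynomial.exists_eval_ne_zero (MvPowerSeries.homogeneousPart_degree_ne_zero hd)
  exact ⟨a, fun h ↦ ha <| by rw [← coeff_substLine, h, map_zero]⟩
end

section
/- Let R be a countable commutative ring and V = Spec R. Suppose (Xᵢ)_{i≥0} is a sequence of subsets of V each of which is Zariski dense in V. Then one can choose points xᵢ ∈ Xᵢ for each i such that the set {xᵢ : i ≥ 0} is Zariski dense in V. -/
/-- Let `R` be a countable (nontrivial) commutative ring and `V = Spec R`.  If `(Xᵢ)` is a
sequence of Zariski dense subsets of `V`, then one can choose points `xᵢ ∈ Xᵢ` such that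
`{xᵢ : i ≥ 0}` is Zariski dense in `V`. -/
theorem stmt_6 {R : Type*} [CommRing R] [Countable R] [Nontrivial R]
    (X : ℕ → Set (PrimeSpectrum R))
    (h : ∀ i, Dense (X i)) :
    ∃ x : ℕ → PrimeSpectrum R, (∀ i, x i ∈ X i) ∧ Dense (Set.range x) := by
  classical
  obtain ⟨e, he⟩ := exists_surjective_nat R
  -- for each i, pick a point of X i in the basic open D(e i) if possible
  have hne : ∀ i, ((PrimeSpectrum.basicOpen (e i) : Set (PrimeSpectrum R)) ∩ X i).Nonempty ∨
      ¬ (PrimeSpectrum.basicOpen (e i) : Set (PrimeSpectrum R)).Nonempty := by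
    intro i
    by_cases hb : (PrimeSpectrum.basicOpen (e i) : Set (PrimeSpectrum R)).Nonempty
    · exact Or.inl ((h i).inter_open_nonempty _ (PrimeSpectrum.basicOpen (e i)).2 hb)
    · exact Or.inr hb
  have hXne : ∀ i, (X i).Nonempty := fun i => (h i).nonempty
  choose x0 hx0 using hXne
  set x : ℕ → PrimeSpectrum R := fun i =>
    if hb : ((PrimeSpectrum.basicOpen (e i) : Set (PrimeSpectrum R)) ∩ X i).Nonempty then
      hb.choose else x0 i with hxdef
  refine ⟨x, fun i => ?_, ?_⟩
  · by_cases hb : ((PrimeSpectrum.basicOpen (e i) : Set (PrimeSpectrum R)) ∩ X i).Nonempty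
    · simp only [hxdef, dif_pos hb]; exact hb.choose_spec.2
    · simp only [hxdef, dif_neg hb]; exact hx0 i
  · rw [(PrimeSpectrum.isTopologicalBasis_basic_opens (R := R)).dense_iff]
    rintro o ⟨f, rfl⟩ ho
    obtain ⟨i, rfl⟩ := he f
    have hb : ((PrimeSpectrum.basicOpen (e i) : Set (PrimeSpectrum R)) ∩ X i).Nonempty :=
      (h i).inter_open_nonempty _ (PrimeSpectrum.basicOpen (e i)).2 ho
    refine ⟨x i, ?_, ⟨i, rfl⟩⟩
    simpa only [hxdef, dif_pos hb] using hb.choose_spec.1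
end

section
/- Let F be a complete discretely valued field of characteristic zero with residue field of characteristic p, containing an element x of its valuation ring with 0 < |x − 1| < 1. Then there exists a nonnegative integer m₀ such that for every positive integer m and every element x_m of an algebraic closure of F with x_m^{p^m} = x but x_m^{p^{m-1}} ≠ x (for any choice of p^{m-1}-th root relation, i.e., x_m is a p^m-th root of x of exact order), the degree satisfies p^{m−m₀} ≤ [F(x_m):F] ≤ p^m. -/
/-!
Extend the valuation of `F` to a valuation `w` of `F̄` and put `μ = w (y - 1) < 1`. Since
`(1 + t) ^ p = 1 + t ^ p + p t s` with `s` integral, passing from `y ^ p ^ j - 1` to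
`y ^ p ^ (j + 1) - 1` either raises the valuation to the `p`-th power or multiplies it by at most
`w p`. As `v` is `ℤᵐ⁰`-valued, `v p ≤ exp (-1)` while `v (x - 1) > exp (-a)`, so at most `a` of the
`m` steps up to `y ^ p ^ m = x` are of the second kind, so `w (x - 1) ≤ μ ^ p ^ (m - a)`. Hence no `μ ^ k` with `0 < k < p ^ (m - 2a)`
is a value of `F`, the nonzero terms of a relation `∑ c i * (y - 1) ^ i = 0` have pairwise distinct
valuations, and the powers `(y - 1) ^ i`, `i < p ^ (m - 2a)`, are linearly independent over `F`.
-/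

open WithZero IntermediateField

theorem WithZero.pow_le_exp_neg_of_lt_one {g : ℤᵐ⁰} (hg : g < 1) (n : ℕ) :
    g ^ n ≤ exp (-(n : ℤ)) := by
  have hg' : g ≤ exp (-1) :=
    (lt_mul_exp_iff_le exp_ne_zero).mp (by rwa [← exp_add, neg_add_cancel, exp_zero])
  calc g ^ n ≤ exp (-1) ^ n := pow_le_pow_left₀ zero_le hg' n
    _ = exp (-(n : ℤ)) := by rw [← exp_nsmul]; simp

namespace Valuation

section

variable {K Γ : Type*} [Field K] [LinearOrderedCommGroupWithZero Γ] (w : Valuation K Γ)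
  {p : ℕ}

theorem map_natCast_le_one (n : ℕ) : w n ≤ 1 :=
  (w.mem_integer_iff _).mp (natCast_mem _ n)

theorem map_sub_one_le_one {z : K} (hz : w z ≤ 1) : w (z - 1) ≤ 1 :=
  (w.map_sub _ _).trans (max_le hz w.map_one.le)

theorem exists_pow_prime_sub_one_eq (hp : p.Prime) {z : K} (hz : w (z - 1) ≤ 1) :
    ∃ s, w s ≤ 1 ∧ z ^ p - 1 = (z - 1) ^ p + p * (z - 1) * s := by
  refine ⟨∑ k ∈ Finset.Ioo 0 p, (z - 1) ^ (p - k - 1) * (p.choose k / p : ℕ), ?_, ?_⟩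
  · rw [← mem_integer_iff] at hz ⊢
    exact Subring.sum_mem _ fun k _ ↦ mul_mem (pow_mem hz _) (natCast_mem _ _)
  · have h := add_pow_prime_eq hp 1 (z - 1)
    simp only [add_sub_cancel, one_pow, mul_one, one_mul] at h
    linear_combination h

theorem map_pow_prime_sub_one_le (hp : p.Prime) {z : K} (hz : w (z - 1) ≤ 1) :
    w (z ^ p - 1) ≤ max (w (z - 1) ^ p) (w p * w (z - 1)) := by
  obtain ⟨s, hs, h⟩ := w.exists_pow_prime_sub_one_eq hp hz
  rw [h, ← map_pow]
  refine (w.map_add _ _).trans (max_le_max le_rfl ?_)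
  rw [map_mul, map_mul]
  exact mul_le_of_le_one_right' hs

theorem map_sub_one_lt_one_of_pow_prime (hp : p.Prime) (hwp : w p < 1) {z : K}
    (hz : w (z - 1) ≤ 1) (h : w (z ^ p - 1) < 1) : w (z - 1) < 1 := by
  obtain ⟨s, hs, heq⟩ := w.exists_pow_prime_sub_one_eq hp hz
  have hsub : (z - 1) ^ p = (z ^ p - 1) - p * (z - 1) * s := by rw [heq]; ring
  have hlt : w ((z - 1) ^ p) < 1 := by
    refine hsub ▸ (w.map_sub _ _).trans_lt (max_lt h ?_)
    rw [map_mul, map_mul]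
    exact (mul_le_of_le_one_right' hs).trans_lt (mul_lt_one_of_lt_of_le hwp hz)
  rwa [map_pow, pow_lt_one_iff_of_nonneg zero_le hp.ne_zero] at hlt

theorem map_sub_one_lt_one_of_pow_prime_pow (hp : p.Prime) (hwp : w p < 1) {z : K}
    (hz : w z ≤ 1) (n : ℕ) (h : w (z ^ p ^ n - 1) < 1) : w (z - 1) < 1 := by
  induction n generalizing z with
  | zero => simpa using h
  | succ n ih =>
    have hzp : w (z ^ p) ≤ 1 := by rw [map_pow]; exact pow_le_one' hz _
    rw [pow_succ', pow_mul] at h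
    exact w.map_sub_one_lt_one_of_pow_prime hp hwp (w.map_sub_one_le_one hz) (ih hzp h)

theorem exists_map_pow_prime_pow_sub_one_le (hp : p.Prime) {z : K} (hz : w z ≤ 1) (n : ℕ) :
    ∃ r ≤ n, w (z ^ p ^ n - 1) ≤ w p ^ r * w (z - 1) ^ p ^ (n - r) := by
  induction n with
  | zero => exact ⟨0, le_rfl, by simp⟩
  | succ n ih =>
    obtain ⟨r, hrn, hr⟩ := ih
    have hu : w (z ^ p ^ n - 1) ≤ 1 :=
      w.map_sub_one_le_one (by rw [map_pow]; exact pow_le_one' hz _)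
    have hstep := w.map_pow_prime_sub_one_le hp hu
    rw [← pow_mul, ← pow_succ] at hstep
    rcases le_total (w (z ^ p ^ n - 1) ^ p) (w p * w (z ^ p ^ n - 1)) with hmax | hmax
    · refine ⟨r + 1, by omega, ?_⟩
      calc w (z ^ p ^ (n + 1) - 1) ≤ w p * w (z ^ p ^ n - 1) := hstep.trans (max_eq_right hmax).le
        _ ≤ w p * (w p ^ r * w (z - 1) ^ p ^ (n - r)) := mul_le_mul_right hr _
        _ = w p ^ (r + 1) * w (z - 1) ^ p ^ (n + 1 - (r + 1)) := by
          rw [Nat.add_sub_add_right, pow_succ', mul_assoc]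
    · refine ⟨r, by omega, ?_⟩
      calc w (z ^ p ^ (n + 1) - 1) ≤ w (z ^ p ^ n - 1) ^ p := hstep.trans (max_eq_left hmax).le
        _ ≤ (w p ^ r * w (z - 1) ^ p ^ (n - r)) ^ p := pow_le_pow_left' hr p
        _ = w p ^ (r * p) * w (z - 1) ^ p ^ (n + 1 - r) := by
          rw [mul_pow, ← pow_mul, ← pow_mul, show n + 1 - r = n - r + 1 by omega, pow_succ]
        _ ≤ w p ^ r * w (z - 1) ^ p ^ (n + 1 - r) :=
          mul_le_mul_left (pow_le_pow_right_of_le_one' (w.map_natCast_le_one p)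
            (Nat.le_mul_of_pos_right r hp.pos)) _

theorem eq_zero_of_sum_eq_zero {ι : Type*} {s : Finset ι} {f : ι → K}
    (hf : ∀ i ∈ s, ∀ j ∈ s, f i ≠ 0 → w (f i) = w (f j) → i = j)
    (hsum : ∑ i ∈ s, f i = 0) : ∀ i ∈ s, f i = 0 := by
  classical
  by_contra! ⟨i, hi, hfi⟩
  obtain ⟨j, hj, hmax⟩ := s.exists_max_image (fun i ↦ w (f i)) ⟨i, hi⟩
  have hfj : w (f j) ≠ 0 := ((w.pos_iff.mpr hfi).trans_le (hmax i hi)).ne'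
  have hlt : ∀ k ∈ s \ {j}, w (f k) < w (f j) := fun k hk ↦ by
    rw [Finset.mem_sdiff, Finset.mem_singleton] at hk
    exact (hmax k hk.1).lt_of_ne fun h ↦ hk.2 (hf j hj k hk.1 (w.ne_zero_iff.mp hfj) h.symm).symm
  exact hfj (by rw [← w.map_sum_eq_of_lt hj hlt, hsum, map_zero])

end

theorem exists_valuationSubring_hasExtension {F Γ₀ : Type*} [Field F]
    [LinearOrderedCommGroupWithZero Γ₀] (v : Valuation F Γ₀) (K : Type*) [Field K] [Algebra F K] :
    ∃ O : ValuationSubring K, v.HasExtension O.valuation := by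
  obtain ⟨O, hO, hloc⟩ := IsLocalRing.exists_factor_valuationRing
    ((algebraMap F K).comp v.valuationSubring.subtype)
  refine ⟨O, ⟨isEquiv_of_val_le_one fun {c} ↦ ⟨fun hc ↦ O.valuation_le_one ⟨_, hO ⟨c, hc⟩⟩, ?_⟩⟩⟩
  intro hc
  by_contra hcR
  have hc0 : c ≠ 0 := by rintro rfl; simp at hcR
  have hinv : c⁻¹ ∈ v.valuationSubring := (v.valuationSubring.mem_or_inv_mem c).resolve_left hcR
  have hunit : IsUnit (⟨c⁻¹, hinv⟩ : v.valuationSubring) := by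
    apply hloc.map_nonunit
    refine IsUnit.of_mul_eq_one (b := ⟨algebraMap F K c, (O.valuation_le_one_iff _).mp hc⟩) ?_
    ext
    simp [hc0]
  obtain ⟨b, hb⟩ := hunit.exists_right_inv
  have hcb : c = b := (inv_mul_eq_one₀ hc0).mp (congrArg Subtype.val hb : c⁻¹ * (b : F) = 1)
  exact hcR (hcb ▸ b.2)

end Valuation

theorem linearIndependent_pow_of_map_pow_ne {F K Γ : Type*} [Field F] [Field K] [Algebra F K]
    [LinearOrderedCommGroupWithZero Γ] (w : Valuation K Γ) {z : K} (hz : z ≠ 0) {N : ℕ}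
    (h : ∀ k, 0 < k → k < N → ∀ c : F, w z ^ k ≠ w (algebraMap F K c)) :
    LinearIndependent F fun i : Fin N ↦ z ^ (i : ℕ) := by
  have key : ∀ i j : Fin N, i < j → ∀ a b : F, b ≠ 0 →
      w (algebraMap F K a * z ^ (i : ℕ)) ≠ w (algebraMap F K b * z ^ (j : ℕ)) := by
    intro i j hij a b hb heq
    have hwb : w (algebraMap F K b) ≠ 0 := by simpa using hb
    apply h (j - i) (by omega) (by omega) (a / b)
    rw [map_div₀, map_div₀, eq_div_iff hwb]
    rw [map_mul, map_mul, map_pow, map_pow, ← Nat.sub_add_cancel hij.le, pow_add] at heq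
    refine mul_right_cancel₀ (pow_ne_zero (i : ℕ) (w.ne_zero_iff.mpr hz)) ?_
    rw [heq]; ac_rfl
  rw [Fintype.linearIndependent_iff]
  intro c hc
  simp only [Algebra.smul_def] at hc
  have hzero := w.eq_zero_of_sum_eq_zero (s := Finset.univ) ?_ hc
  · intro i
    simpa [hz] using hzero i (Finset.mem_univ i)
  intro i _ j _ hi heq
  have hj : algebraMap F K (c j) * z ^ (j : ℕ) ≠ 0 := by
    rw [← w.ne_zero_iff, ← heq, w.ne_zero_iff]; exact hi
  by_contra hij
  rcases lt_or_gt_of_ne hij with hlt | hlt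
  · exact key i j hlt _ _ (by simpa using left_ne_zero_of_mul hj) heq
  · exact key j i hlt _ _ (by simpa using left_ne_zero_of_mul hi) heq.symm

theorem finrank_adjoin_le_of_pow_eq {F K : Type*} [Field F] [Field K] [Algebra F K] {n : ℕ}
    (hn : n ≠ 0) {y : K} {a : F} (hy : y ^ n = algebraMap F K a) :
    Module.finrank F F⟮y⟯ ≤ n := by
  have hmonic := Polynomial.monic_X_pow_sub_C a hn
  have hroot : Polynomial.aeval y (Polynomial.X ^ n - Polynomial.C a) = 0 := by simp [hy]
  rw [adjoin.finrank ⟨_, hmonic, by simpa [Polynomial.eval₂_eq_eval_map] using hroot⟩,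
    ← Polynomial.natDegree_X_pow_sub_C (n := n) (r := a)]
  exact Polynomial.natDegree_le_natDegree (minpoly.degree_le_of_ne_zero F y hmonic.ne_zero hroot)

namespace Valuation.HasExtension

variable {F K Γ : Type*} [Field F] [Field K] [Algebra F K] [LinearOrderedCommGroupWithZero Γ]
  {v : Valuation F ℤᵐ⁰} (w : Valuation K Γ) [v.HasExtension w] {p : ℕ} {x : F} {y : K} {m : ℕ}

theorem map_natCast_lt_one (hvp : v p < 1) : w p < 1 := by
  rwa [← map_natCast (algebraMap F K), val_map_lt_one_iff v]

theorem map_le_one_of_pow_eq (hm : m ≠ 0) (hx : v x ≤ 1) (hy : y ^ m = algebraMap F K x) :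
    w y ≤ 1 := by
  rw [← pow_le_one_iff_of_nonneg zero_le hm, ← map_pow, hy]
  exact (val_map_le_one_iff v w x).mpr hx

theorem map_sub_one_lt_one_of_pow_eq (hp : p.Prime) (hvp : v p < 1) (hx : v x ≤ 1)
    (hx1 : v (x - 1) < 1) (hy : y ^ p ^ m = algebraMap F K x) : w (y - 1) < 1 := by
  refine w.map_sub_one_lt_one_of_pow_prime_pow hp (map_natCast_lt_one w hvp)
    (map_le_one_of_pow_eq w (pow_ne_zero m hp.ne_zero) hx hy) m ?_
  rwa [show y ^ p ^ m - 1 = algebraMap F K (x - 1) by rw [hy, _root_.map_sub, _root_.map_one],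
    val_map_lt_one_iff v]

theorem map_algebraMap_sub_one_le (hp : p.Prime) (hvp : v p < 1) (hx : v x ≤ 1) {a : ℕ}
    (hxa : exp (-(a : ℤ)) ≤ v (x - 1)) (hy : y ^ p ^ m = algebraMap F K x) :
    w (algebraMap F K (x - 1)) ≤ w (y - 1) ^ p ^ (m - a) := by
  have hwy := map_le_one_of_pow_eq w (pow_ne_zero m hp.ne_zero) hx hy
  obtain ⟨r, -, hr⟩ := w.exists_map_pow_prime_pow_sub_one_le hp hwy m
  rw [show y ^ p ^ m - 1 = algebraMap F K (x - 1) by rw [hy, _root_.map_sub, _root_.map_one]] at hr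
  have hra : r ≤ a := by
    have h : w (algebraMap F K (x - 1)) ≤ w (algebraMap F K (p ^ r)) := by
      rw [map_pow, map_natCast, map_pow]
      exact hr.trans (mul_le_of_le_one_right' (pow_le_one' (w.map_sub_one_le_one hwy) _))
    rw [val_map_le_iff v, map_pow] at h
    have := hxa.trans (h.trans (pow_le_exp_neg_of_lt_one hvp r))
    rw [exp_le_exp] at this
    omega
  refine hr.trans ((mul_le_of_le_one_left' (pow_le_one' (w.map_natCast_le_one p) _)).trans ?_)
  exact pow_le_pow_right_of_le_one' (w.map_sub_one_le_one hwy)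
    (Nat.pow_le_pow_right hp.pos (by omega))

theorem pow_ne_map_algebraMap {μ : Γ} (hμ : μ < 1) {a P : ℕ} (hxa : exp (-(a : ℤ)) ≤ v (x - 1))
    (hP : w (algebraMap F K (x - 1)) ≤ μ ^ P) {k : ℕ} (hk0 : 0 < k) (hk : a * k < P) (c : F) :
    μ ^ k ≠ w (algebraMap F K c) := by
  intro hc
  have hc1 : v c < 1 := by
    rw [← val_map_lt_one_iff v w, ← hc]
    exact pow_lt_one₀ zero_le hμ hk0.ne'
  have h : w (algebraMap F K ((x - 1) ^ k)) ≤ w (algebraMap F K (c ^ P)) := by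
    rw [map_pow, map_pow, map_pow, map_pow, ← hc, ← pow_mul, mul_comm k P, pow_mul]
    exact pow_le_pow_left₀ zero_le hP k
  rw [val_map_le_iff v, map_pow, map_pow] at h
  have := (pow_le_pow_left₀ zero_le hxa k).trans (h.trans (pow_le_exp_neg_of_lt_one hc1 P))
  rw [← exp_nsmul, exp_le_exp, smul_neg, neg_le_neg_iff, nsmul_eq_mul] at this
  exact (Nat.not_le.mpr hk) (by rw [mul_comm]; exact_mod_cast this)

include w in
theorem le_finrank_adjoin (hp : p.Prime) (hvp : v p < 1) (hx : v x ≤ 1) (hx1 : v (x - 1) < 1)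
    {a : ℕ} (hxa : exp (-(a : ℤ)) ≤ v (x - 1)) (hy : y ^ p ^ m = algebraMap F K x)
    (hyint : IsIntegral F y) : p ^ (m - 2 * a) ≤ Module.finrank F F⟮y⟯ := by
  have hy1 : y - 1 ≠ 0 := by
    rintro hy1
    rw [sub_eq_zero.mp hy1, one_pow, ← map_one (algebraMap F K)] at hy
    rw [(algebraMap F K).injective hy, sub_self, map_zero] at hxa
    exact exp_ne_zero (le_zero_iff.mp hxa)
  have hak : ∀ k, 0 < k → k < p ^ (m - 2 * a) → a * k < p ^ (m - a) := fun k hk0 hk ↦ by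
    have hm : 2 * a < m := by
      by_contra! h
      rw [Nat.sub_eq_zero_of_le h, pow_zero] at hk
      omega
    calc a * k < p ^ a * k := Nat.mul_lt_mul_of_pos_right (Nat.lt_pow_self hp.one_lt) hk0
      _ ≤ p ^ a * p ^ (m - 2 * a) := Nat.mul_le_mul_left _ hk.le
      _ = p ^ (m - a) := by rw [← pow_add]; congr 1; omega
  have hli : LinearIndependent F fun i : Fin (p ^ (m - 2 * a)) ↦ (y - 1) ^ (i : ℕ) :=
    linearIndependent_pow_of_map_pow_ne w hy1 fun k hk0 hk ↦
      pow_ne_map_algebraMap w (map_sub_one_lt_one_of_pow_eq w hp hvp hx hx1 hy) hxa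
        (map_algebraMap_sub_one_le w hp hvp hx hxa hy) hk0 (hak k hk0 hk)
  have : FiniteDimensional F F⟮y⟯ := adjoin.finiteDimensional hyint
  have hmem (i : ℕ) : (y - 1) ^ i ∈ F⟮y⟯ :=
    pow_mem (sub_mem (mem_adjoin_simple_self F y) (one_mem _)) i
  have hli' : LinearIndependent F fun i : Fin (p ^ (m - 2 * a)) ↦
      (⟨(y - 1) ^ (i : ℕ), hmem i⟩ : F⟮y⟯) :=
    .of_comp F⟮y⟯.val.toLinearMap hli
  simpa using hli'.fintype_card_le_finrank

end Valuation.HasExtension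

theorem stmt_9_general (p : ℕ) (hp : p.Prime) (F : Type*) [Field F]
    [Valued F (WithZero (Multiplicative ℤ))]
    (hres : Valued.v (p : F) < 1)
    (x : F) (hx_int : Valued.v x ≤ 1)
    (hx1 : Valued.v (x - 1) < 1) (hx0 : Valued.v (x - 1) ≠ 0) :
    ∃ m₀ : ℕ, ∀ m : ℕ, 0 < m → ∀ y : AlgebraicClosure F,
      y ^ (p ^ m) = algebraMap F (AlgebraicClosure F) x →
      y ^ (p ^ (m - 1)) ≠ algebraMap F (AlgebraicClosure F) x →
      p ^ (m - m₀) ≤ Module.finrank F ↥(IntermediateField.adjoin F {y}) ∧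
        Module.finrank F ↥(IntermediateField.adjoin F {y}) ≤ p ^ m := by
  obtain ⟨O, hO⟩ := (Valued.v : Valuation F ℤᵐ⁰).exists_valuationSubring_hasExtension
    (AlgebraicClosure F)
  obtain ⟨a, ha⟩ := exists_exp_neg_natCast_lt hx0
  refine ⟨2 * a, fun m _ y hy _ ↦ ⟨?_, finrank_adjoin_le_of_pow_eq (pow_ne_zero m hp.ne_zero) hy⟩⟩
  exact Valuation.HasExtension.le_finrank_adjoin O.valuation hp hres hx_int hx1 ha.le hy
    (Algebra.IsIntegral.isIntegral y)

/-- Let `F` be a complete discretely valued field of characteristic `0`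
with residue characteristic `p` (i.e. `|p| < 1`), and `x ∈ F°` with `0 < |x − 1| < 1`.
Then there is `m₀ ≥ 0` such that for every `m ≥ 1` and every `p^m`-th root `y` of `x`
(in an algebraic closure) which is not a `p^{m−1}`-th root of `x`, one has
`p^{m−m₀} ≤ [F(y) : F] ≤ p^m`. -/
theorem stmt_9 (p : ℕ) (hp : p.Prime) (F : Type*) [Field F]
    [Valued F (WithZero (Multiplicative ℤ))] [CompleteSpace F] [CharZero F]
    [IsDiscreteValuationRing
      ↥((Valued.v : Valuation F (WithZero (Multiplicative ℤ))).valuationSubring)]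
    (hres : Valued.v (p : F) < 1)
    (x : F) (hx_int : Valued.v x ≤ 1)
    (hx1 : Valued.v (x - 1) < 1) (hx0 : Valued.v (x - 1) ≠ 0) :
    ∃ m₀ : ℕ, ∀ m : ℕ, 0 < m → ∀ y : AlgebraicClosure F,
      y ^ (p ^ m) = algebraMap F (AlgebraicClosure F) x →
      y ^ (p ^ (m - 1)) ≠ algebraMap F (AlgebraicClosure F) x →
      p ^ (m - m₀) ≤ Module.finrank F ↥(IntermediateField.adjoin F {y}) ∧
        Module.finrank F ↥(IntermediateField.adjoin F {y}) ≤ p ^ m :=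
  stmt_9_general p hp F hres x hx_int hx1 hx0
end

section
/- Let {Bᵢ} be a direct system of noetherian local rings with local, flat (e.g., étale) injective transition maps Bᵢ → Bⱼ that induce isomorphisms Bᵢ/𝔭ᵢⁿ ≅ Bⱼ/𝔭ⱼⁿ on quotients by all powers of the maximal ideals. Let B = colim Bᵢ with maximal ideal 𝔭 = ⋃ 𝔭ᵢ. Then for every i and every n ≥ 1, the natural map Bᵢ/𝔭ᵢⁿ → B/𝔭ⁿ is an isomorphism; consequently the completions of Bᵢ and B agree. -/
open IsLocalRing

/-- If `f` carries `I` into `J`, then it carries `Iⁿ` into `Jⁿ`. -/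
lemma pow_le_comap_of_apply_mem {A B : Type*} [CommRing A] [CommRing B]
    (f : A →+* B) (I : Ideal A) (J : Ideal B)
    (h : ∀ x ∈ I, f x ∈ J) (n : ℕ) : I ^ n ≤ (J ^ n).comap f := by
  have h1 : I.map f ≤ J := Ideal.map_le_iff_le_comap.mpr h
  intro x hx
  have hx' : f x ∈ (I.map f) ^ n := by
    rw [← Ideal.map_pow]; exact Ideal.mem_map_of_mem f hx
  exact Ideal.mem_comap.mpr (Ideal.pow_right_mono h1 n hx')

/-- Pushing membership in a power of the maximal ideal up the tower. -/
lemma stmt11_push {B : Type*} [CommRing B] (S : ℕ → Subring B)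
    [∀ i, IsLocalRing (S i)] (hmono : Monotone S)
    (hlocal : ∀ i j (hij : i ≤ j), ∀ x : S i, x ∈ maximalIdeal (S i) →
      Subring.inclusion (hmono hij) x ∈ maximalIdeal (S j))
    {l m : ℕ} (h : l ≤ m) {n : ℕ} {x : B} (hxl : x ∈ S l) (hxm : x ∈ S m)
    (hx : (⟨x, hxl⟩ : S l) ∈ maximalIdeal (S l) ^ n) :
    (⟨x, hxm⟩ : S m) ∈ maximalIdeal (S m) ^ n := by
  have := pow_le_comap_of_apply_mem (Subring.inclusion (hmono h)) _ _ (hlocal l m h) n hx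
  rw [Ideal.mem_comap] at this
  have he : (⟨x, hxm⟩ : S m) = Subring.inclusion (hmono h) ⟨x, hxl⟩ := Subtype.ext rfl
  rw [he]; exact this

/-- The ideal of elements that lie in `𝔭ₗⁿ` for some `l`. -/
def stmt11_T {B : Type*} [CommRing B] (S : ℕ → Subring B)
    [∀ i, IsLocalRing (S i)] (hmono : Monotone S)
    (hunion : ∀ b : B, ∃ i, b ∈ S i)
    (hlocal : ∀ i j (hij : i ≤ j), ∀ x : S i, x ∈ maximalIdeal (S i) →
      Subring.inclusion (hmono hij) x ∈ maximalIdeal (S j))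
    (n : ℕ) : Ideal B where
  carrier := {b | ∃ l, ∃ hb : b ∈ S l, (⟨b, hb⟩ : S l) ∈ maximalIdeal (S l) ^ n}
  zero_mem' := ⟨0, zero_mem _, by
    have : (⟨(0 : B), zero_mem _⟩ : S 0) = 0 := Subtype.ext rfl
    rw [this]; exact zero_mem _⟩
  add_mem' := by
    rintro a b ⟨l, hl, hla⟩ ⟨l', hl', hlb⟩
    refine ⟨max l l', add_mem (hmono (le_max_left l l') hl) (hmono (le_max_right l l') hl'), ?_⟩
    have ha := stmt11_push S hmono hlocal (le_max_left l l') hl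
      (hmono (le_max_left l l') hl) hla
    have hb := stmt11_push S hmono hlocal (le_max_right l l') hl'
      (hmono (le_max_right l l') hl') hlb
    have : (⟨a + b, _⟩ : S (max l l')) =
        ⟨a, hmono (le_max_left l l') hl⟩ + ⟨b, hmono (le_max_right l l') hl'⟩ :=
      Subtype.ext rfl
    rw [this]; exact add_mem ha hb
  smul_mem' := by
    rintro c x ⟨l, hl, hlx⟩
    obtain ⟨j, hj⟩ := hunion c
    refine ⟨max j l, mul_mem (hmono (le_max_left j l) hj) (hmono (le_max_right j l) hl), ?_⟩
    have hx := stmt11_push S hmono hlocal (le_max_right j l) hl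
      (hmono (le_max_right j l) hl) hlx
    have : (⟨c * x, _⟩ : S (max j l)) =
        ⟨c, hmono (le_max_left j l) hj⟩ * ⟨x, hmono (le_max_right j l) hl⟩ :=
      Subtype.ext rfl
    have hmem : (⟨c * x, mul_mem (hmono (le_max_left j l) hj)
        (hmono (le_max_right j l) hl)⟩ : S (max j l)) ∈ maximalIdeal (S (max j l)) ^ n := by
      rw [this]; exact Ideal.mul_mem_left _ _ hx
    exact hmem

set_option synthInstance.maxHeartbeats 1000000 in
set_option maxHeartbeats 1000000 in
/-- Let `B` be a commutative ring exhausted by an increasing family of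
noetherian local subrings `S i` whose inclusions are flat and local and induce
isomorphisms `Sᵢ/𝔭ᵢⁿ ≅ Sⱼ/𝔭ⱼⁿ` on all quotients by powers of the maximal ideals.  Let
`𝔭 = ⋃ᵢ 𝔭ᵢ` (as an ideal of `B`).  Then for every `i` and `n ≥ 1`, the natural map
`Sᵢ/𝔭ᵢⁿ → B/𝔭ⁿ` is an isomorphism. -/
theorem stmt_11 {B : Type*} [CommRing B] (S : ℕ → Subring B)
    [∀ i, IsNoetherianRing (S i)] [∀ i, IsLocalRing (S i)]
    (hmono : Monotone S)
    (hunion : ∀ b : B, ∃ i, b ∈ S i)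
    -- the transition maps are flat
    (hflat : ∀ i j (hij : i ≤ j), (Subring.inclusion (hmono hij)).Flat)
    -- the transition maps are local
    (hlocal : ∀ i j (hij : i ≤ j), ∀ x : S i, x ∈ maximalIdeal (S i) →
      Subring.inclusion (hmono hij) x ∈ maximalIdeal (S j))
    -- the transition maps induce isomorphisms on all quotients by powers of the
    -- maximal ideals
    (hquot : ∀ i j (hij : i ≤ j) (n : ℕ),
      Function.Bijective (Ideal.quotientMap ((maximalIdeal (S j)) ^ n)
        (Subring.inclusion (hmono hij))
        (pow_le_comap_of_apply_mem _ _ _ (hlocal i j hij) n))) :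
    ∀ i (n : ℕ), 0 < n →
      Function.Bijective (Ideal.quotientMap
        ((⨆ k, (maximalIdeal (S k)).map (S k).subtype) ^ n)
        (S i).subtype
        (pow_le_comap_of_apply_mem _ _ _
          (fun x hx => le_iSup (fun k => (maximalIdeal (S k)).map (S k).subtype) i
            (Ideal.mem_map_of_mem _ hx)) n)) := by
  intro i n _
  set P : Ideal B := ⨆ k, (maximalIdeal (S k)).map (S k).subtype with hPdef
  set T : ℕ → Ideal B := stmt11_T S hmono hunion hlocal with hTdef
  -- map of 𝔭ₘⁿ lands in Pⁿ
  have key1 : ∀ m, (maximalIdeal (S m) ^ n).map (S m).subtype ≤ P ^ n := by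
    intro m
    rw [Ideal.map_pow]
    exact Ideal.pow_right_mono (le_iSup (fun k => (maximalIdeal (S k)).map (S k).subtype) m) n
  -- Pⁿ ≤ T n
  have hP1 : P ≤ T 1 := by
    apply iSup_le
    intro k
    rw [Ideal.map_le_iff_le_comap]
    intro x hx
    refine ⟨k, x.2, ?_⟩
    rw [pow_one]
    exact hx
  have hmul : ∀ m, T m * T 1 ≤ T (m + 1) := by
    intro m
    rw [Ideal.mul_le]
    rintro r hr s ⟨l', hl', hs⟩
    obtain ⟨l, hl, hrm⟩ := hr
    refine ⟨max l l', mul_mem (hmono (le_max_left l l') hl) (hmono (le_max_right l l') hl'), ?_⟩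
    have h1 := stmt11_push S hmono hlocal (le_max_left l l') hl
      (hmono (le_max_left l l') hl) hrm
    have h2 := stmt11_push S hmono hlocal (le_max_right l l') hl'
      (hmono (le_max_right l l') hl') hs
    have : (⟨r * s, _⟩ : S (max l l')) =
        ⟨r, hmono (le_max_left l l') hl⟩ * ⟨s, hmono (le_max_right l l') hl'⟩ :=
      Subtype.ext rfl
    rw [this, pow_succ]
    exact Ideal.mul_mem_mul h1 (by rwa [pow_one] at h2)
  have hT1n : ∀ m : ℕ, T 1 ^ m ≤ T m := by
    intro m
    induction m with
    | zero =>
      intro x _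
      obtain ⟨l, hl⟩ := hunion x
      exact ⟨l, hl, by rw [pow_zero, Ideal.one_eq_top]; exact Submodule.mem_top⟩
    | succ m ih =>
      rw [pow_succ]
      exact le_trans (Ideal.mul_mono_left ih) (hmul m)
  have key2 : P ^ n ≤ T n := le_trans (Ideal.pow_right_mono hP1 n) (hT1n n)
  constructor
  · rw [injective_iff_map_eq_zero]
    intro x hx
    obtain ⟨a, rfl⟩ := Ideal.Quotient.mk_surjective x
    rw [Ideal.quotientMap_mk, Ideal.Quotient.eq_zero_iff_mem] at hx
    obtain ⟨l, hb, hmem⟩ := key2 hx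
    have ham : (a : B) ∈ S (max i l) := hmono (le_max_left i l) a.2
    have hm1 : (⟨(a : B), ham⟩ : S (max i l)) ∈ maximalIdeal (S (max i l)) ^ n :=
      stmt11_push S hmono hlocal (le_max_right i l) hb ham hmem
    have hinj := (hquot i (max i l) (le_max_left i l) n).1
    rw [injective_iff_map_eq_zero] at hinj
    apply hinj
    rw [Ideal.quotientMap_mk, Ideal.Quotient.eq_zero_iff_mem]
    have : Subring.inclusion (hmono (le_max_left i l)) a = ⟨(a : B), ham⟩ := Subtype.ext rfl
    rw [this]; exact hm1
  · intro y
    obtain ⟨b, rfl⟩ := Ideal.Quotient.mk_surjective y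
    obtain ⟨j, hj⟩ := hunion b
    have hbm : b ∈ S (max i j) := hmono (le_max_right i j) hj
    obtain ⟨c, hc⟩ := (hquot i (max i j) (le_max_left i j) n).2
      (Ideal.Quotient.mk _ (⟨b, hbm⟩ : S (max i j)))
    obtain ⟨a, rfl⟩ := Ideal.Quotient.mk_surjective c
    refine ⟨Ideal.Quotient.mk _ a, ?_⟩
    rw [Ideal.quotientMap_mk] at hc ⊢
    rw [Ideal.Quotient.mk_eq_mk_iff_sub_mem] at hc ⊢
    apply key1 (max i j)
    have : ((Subring.inclusion (hmono (le_max_left i j)) a - ⟨b, hbm⟩ : S (max i j)) : B)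
        = (S i).subtype a - b := rfl
    exact this ▸ Ideal.mem_map_of_mem _ hc
end

section
/- Let G be a formal torus over the valuation ring F° of a finite extension F of W(k)[1/p] (k algebraically closed of characteristic p), r > 1 an integer, F_{cycl,r} = F(μ_{p^r}), and P ∈ G(F̄°) a point such that pⁿP ∈ G(F_{cycl,r}°) for some n ≥ 0 but p^{r−1}P ∉ G(F_{cycl,r}°). Then there exists σ ∈ Gal(F̄/F_{cycl,r}) such that σ(P) − P is a p^r-torsion point of G that is not p^{r−1}-torsion. -/
/-!
Boxall's trick, written multiplicatively. Let `L = F(μ_{p^r})`, let `s ≥ r` be minimal with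
`P ^ p ^ s` rational over `L`, and pick `σ ∈ Gal(F̄/L)` moving `P ^ p ^ (s - 1)`. Then
`η = σ P / P` is a `p ^ s`-th root of unity and `σ` acts on `μ_{p^s}` as `ζ ↦ ζ ^ a` with
`a ≡ 1 mod p ^ 2`, because `μ_{p^2} ⊆ L`. Hence `σ ^ k P / P = η ^ (1 + a + ⋯ + a ^ (k - 1))`,
and for `k = p ^ (s - r)` the exponent is `p ^ (s - r)` times a unit mod `p`. So
`τ = σ ^ p ^ (s - r)` satisfies `(τ P / P) ^ p ^ r = σ (P ^ p ^ s) / P ^ p ^ s = 1`, while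
`(τ P / P) ^ p ^ (r - 1) = σ (P ^ p ^ (s - 1)) / P ^ p ^ (s - 1) ≠ 1`.
-/

open Finset

theorem geom_sum_range_mul {R : Type*} [CommSemiring R] (a : R) (m k : ℕ) :
    ∑ j ∈ range (m * k), a ^ j = (∑ j ∈ range m, a ^ j) * ∑ i ∈ range k, (a ^ m) ^ i := by
  induction k with
  | zero => simp
  | succ k ih =>
    rw [Nat.mul_succ, sum_range_add, ih, sum_range_succ, mul_add, sum_mul _ _ ((a ^ m) ^ k)]
    congr 1
    exact sum_congr rfl fun j _ => by rw [← pow_mul, ← pow_add, add_comm]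

theorem pow_add_two_dvd_pow_succ_sub_mul {R : Type*} [CommRing R] {p A B : R} {d : ℕ}
    (hA : p ^ (d + 1) ∣ p ^ d - A) (hB : p ^ 2 ∣ p - B) : p ^ (d + 2) ∣ p ^ (d + 1) - A * B := by
  have hpB : p ∣ B := by
    have := (dvd_pow_self p two_ne_zero).trans hB
    simpa using (dvd_refl p).sub this
  have : p ^ (d + 1) - A * B = (p ^ d - A) * B + p ^ d * (p - B) := by ring
  rw [this]
  exact dvd_add (by rw [pow_succ]; exact mul_dvd_mul hA hpB)
    (by rw [pow_add]; exact mul_dvd_mul_left _ hB)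

theorem geom_sum_range_pow_modEq {a p : ℕ} (ha : a ≡ 1 [MOD p ^ 2]) (d : ℕ) :
    ∑ j ∈ range (p ^ d), a ^ j ≡ p ^ d [MOD p ^ (d + 1)] := by
  induction d with
  | zero => simp [Nat.ModEq]
  | succ d ih =>
    have hblock : ∑ i ∈ range p, (a ^ p ^ d) ^ i ≡ p [MOD p ^ 2] :=
      (Nat.ModEq.sum fun i _ => by simpa using (ha.pow (p ^ d)).pow i).trans
        (by simp [Nat.ModEq.refl])
    have hsplit := geom_sum_range_mul a (p ^ d) p
    rw [← pow_succ] at hsplit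
    rw [hsplit, Nat.modEq_iff_dvd]
    rw [Nat.modEq_iff_dvd] at ih hblock
    push_cast at ih hblock ⊢
    exact pow_add_two_dvd_pow_succ_sub_mul ih hblock

theorem pow_mul_pow_eq_of_modEq {M : Type*} [Monoid M] {η : M} {p d k e : ℕ}
    (hη : η ^ p ^ (d + k + 1) = 1) (he : e ≡ p ^ d [MOD p ^ (d + 1)]) :
    η ^ (e * p ^ k) = η ^ p ^ (d + k) := by
  rw [← pow_mod_orderOf, ← pow_mod_orderOf η (p ^ (d + k)), pow_add]
  refine congrArg _ ((he.mul_right' (p ^ k)).of_dvd ?_)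
  rw [← pow_add, show d + 1 + k = d + k + 1 by omega]
  exact orderOf_dvd_of_pow_eq_one hη

theorem IsPrimitiveRoot.exists_map_eq_pow {R F : Type*} [CommRing R] [IsDomain R]
    [FunLike F R R] [MonoidHomClass F R R] {ζ : R} {N : ℕ} [NeZero N]
    (hζ : IsPrimitiveRoot ζ N) (σ : F) : ∃ a : ℕ, ∀ η : R, η ^ N = 1 → σ η = η ^ a := by
  obtain ⟨a, -, ha⟩ :=
    hζ.eq_pow_of_pow_eq_one (ξ := σ ζ) (by rw [← map_pow, hζ.pow_eq_one, map_one])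
  refine ⟨a, fun η hη => ?_⟩
  obtain ⟨m, -, rfl⟩ := hζ.eq_pow_of_pow_eq_one hη
  rw [map_pow, ← ha, ← pow_mul, ← pow_mul, mul_comm]

theorem IsPrimitiveRoot.modEq_one_of_pow_eq_self {M : Type*} [CommMonoid M] {ξ : M} {m a : ℕ}
    (hξ : IsPrimitiveRoot ξ m) (hm : m ≠ 0) (h : ξ ^ a = ξ) : a ≡ 1 [MOD m] := by
  lift ξ to Mˣ using hξ.isUnit hm
  rw [IsPrimitiveRoot.coe_units_iff] at hξ
  rw [hξ.eq_orderOf, ← pow_eq_pow_iff_modEq, pow_one]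
  exact_mod_cast h

theorem AlgEquiv.pow_apply_eq_pow_geom_sum_mul {R A : Type*} [CommSemiring R] [CommSemiring A]
    [Algebra R A] (σ : A ≃ₐ[R] A) {x η : A} {a : ℕ} (hx : σ x = η * x) (hη : σ η = η ^ a)
    (k : ℕ) : (σ ^ k) x = η ^ (∑ j ∈ range k, a ^ j) * x := by
  induction k with
  | zero => simp
  | succ k ih =>
    rw [pow_succ', AlgEquiv.mul_apply, ih, map_mul, map_pow, hη, hx, geom_sum_succ]
    ring

theorem AlgEquiv.pow_pow_apply_div_pow {K L : Type*} [Field K] [Field L] [Algebra L K]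
    (σ : K ≃ₐ[L] K) {p s a : ℕ} (ha : ∀ η : K, η ^ p ^ s = 1 → σ η = η ^ a)
    (ha1 : a ≡ 1 [MOD p ^ 2]) {x : K} (hx : x ≠ 0) (hxs : σ (x ^ p ^ s) = x ^ p ^ s)
    {d k : ℕ} (hs : s ≤ d + k + 1) :
    ((σ ^ p ^ d) x / x) ^ p ^ k = σ (x ^ p ^ (d + k)) / x ^ p ^ (d + k) := by
  set η := σ x / x
  have hηs : η ^ p ^ s = 1 := by rw [div_pow, ← map_pow, hxs, div_self (pow_ne_zero _ hx)]
  have hη : η ^ p ^ (d + k + 1) = 1 := by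
    obtain ⟨c, hc⟩ := pow_dvd_pow p hs
    rw [hc, pow_mul, hηs, one_pow]
  rw [σ.pow_apply_eq_pow_geom_sum_mul (div_mul_cancel₀ _ hx).symm (ha η hηs),
    mul_div_cancel_right₀ _ hx, ← pow_mul,
    pow_mul_pow_eq_of_modEq hη (geom_sum_range_pow_modEq ha1 d), map_pow, div_pow]

theorem Nat.exists_ge_and_not_sub_one_of_monotone {Q : ℕ → Prop} (hQ : Monotone Q)
    (hex : ∃ m, Q m) {r : ℕ} (hr : ¬Q (r - 1)) : ∃ s, r ≤ s ∧ Q s ∧ ¬Q (s - 1) := by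
  classical
  refine ⟨Nat.find hex, ?_, Nat.find_spec hex, fun h => ?_⟩
  · by_contra! h
    exact hr (hQ (by omega) (Nat.find_spec hex))
  · have := Nat.find_min' hex h
    exact hr (hQ (by omega) h)

theorem IntermediateField.exists_algEquiv_apply_ne {F K : Type*} [Field F] [CharZero F]
    [Field K] [Algebra F K] [IsAlgClosure F K] {L : IntermediateField F K} {x : K}
    (hx : x ∉ L) : ∃ σ : K ≃ₐ[L] K, σ x ≠ x := by
  have : IsAlgClosure L K := ⟨IsAlgClosure.isAlgClosed F, .tower_top (K := F) L⟩
  by_contra! h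
  obtain ⟨y, rfl⟩ := (InfiniteGalois.mem_range_algebraMap_iff_fixed x).mpr h
  exact hx y.2

theorem stmt_17_general (p r : ℕ) (hp : p.Prime) (hr : 1 < r) (n : ℕ)
    (F : Type*) [Field F] [CharZero F]
    (w : Valuation (AlgebraicClosure F) NNReal)
    (P : Fin n → AlgebraicClosure F)
    -- `P` is a point of the formal torus: an `n`-tuple of `1`-units of `F̄°`
    (hP : ∀ i, w (P i) = 1 ∧ w (P i - 1) < 1)
    -- `pᵐ·P ∈ G(F_{cycl,r}°)` for some `m ≥ 0`
    (hdiv : ∃ m : ℕ, ∀ i, (P i) ^ (p ^ m) ∈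
      IntermediateField.adjoin F {x : AlgebraicClosure F | x ^ p ^ r = 1})
    -- but `p^{r-1}·P ∉ G(F_{cycl,r}°)`
    (hnot : ¬ ∀ i, (P i) ^ (p ^ (r - 1)) ∈
      IntermediateField.adjoin F {x : AlgebraicClosure F | x ^ p ^ r = 1}) :
    ∃ σ : AlgebraicClosure F ≃ₐ[↥(IntermediateField.adjoin F
        {x : AlgebraicClosure F | x ^ p ^ r = 1})] AlgebraicClosure F,
      (∀ i, (σ (P i) / P i) ^ p ^ r = 1) ∧
        ¬ ∀ i, (σ (P i) / P i) ^ p ^ (r - 1) = 1 := by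
  set L := IntermediateField.adjoin F {x : AlgebraicClosure F | x ^ p ^ r = 1}
  have hP0 (i : Fin n) : P i ≠ 0 := fun h => by simpa [h] using (hP i).1
  have hmono : Monotone fun m => ∀ i, P i ^ p ^ m ∈ L := monotone_nat_of_le_succ fun m h i => by
    rw [pow_succ, pow_mul]
    exact pow_mem (h i) p
  obtain ⟨s, hrs, hs, hs'⟩ := Nat.exists_ge_and_not_sub_one_of_monotone hmono hdiv hnot
  obtain ⟨i₀, hi₀⟩ := not_forall.mp hs'
  obtain ⟨σ, hσ⟩ := IntermediateField.exists_algEquiv_apply_ne hi₀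
  have hfix (y) (hy : y ∈ L) : σ y = y := σ.commutes ⟨y, hy⟩
  have : NeZero (p : F) := ⟨Nat.cast_ne_zero.mpr hp.ne_zero⟩
  have : NeZero (p ^ s) := ⟨pow_ne_zero s hp.ne_zero⟩
  obtain ⟨ζ, hζ⟩ := HasEnoughRootsOfUnity.exists_primitiveRoot (AlgebraicClosure F) (p ^ s)
  obtain ⟨a, ha⟩ := hζ.exists_map_eq_pow σ
  -- the `p ^ 2`-th roots of unity lie in `L` because `2 ≤ r`
  have ha1 : a ≡ 1 [MOD p ^ 2] := by
    obtain ⟨ξ, hξ⟩ := HasEnoughRootsOfUnity.exists_primitiveRoot (AlgebraicClosure F) (p ^ 2)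
    refine hξ.modEq_one_of_pow_eq_self (pow_ne_zero 2 hp.ne_zero) ?_
    rw [← ha ξ ((hξ.pow_eq_one_iff_dvd _).mpr (pow_dvd_pow p (by omega)))]
    exact hfix ξ (IntermediateField.subset_adjoin F _ ((hξ.pow_eq_one_iff_dvd _).mpr
      (pow_dvd_pow p hr)))
  have hτ (i : Fin n) {k : ℕ} (hk : s ≤ s - r + k + 1) :=
    σ.pow_pow_apply_div_pow ha ha1 (hP0 i) (hfix _ (hs i)) hk
  refine ⟨σ ^ p ^ (s - r), fun i => ?_, fun h => hσ ?_⟩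
  · rw [hτ i (by omega), Nat.sub_add_cancel hrs, hfix _ (hs i), div_self (pow_ne_zero _ (hP0 i))]
  · have h₀ := h i₀
    rwa [hτ i₀ (by omega), show s - r + (r - 1) = s - 1 by omega,
      div_eq_one_iff_eq (pow_ne_zero _ (hP0 i₀))] at h₀

/-- **Boxall's trick; Serban.**  Let `F` be a complete discretely valued
field of characteristic `0` and residue characteristic `p`, `K` an algebraic closure of
`F` with (the unique) extension `w` of the valuation, and let
`F_{cycl,r} = F(μ_{p^r})` for an integer `r > 1`.  Identify the points of the formal
torus `G = (Ĝ_m)ⁿ` over the ring of integers of `K` with `n`-tuples of `1`-units.  If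
`P ∈ G(F̄°)` satisfies `pᵐP ∈ G(F_{cycl,r}°)` for some `m ≥ 0` but
`p^{r−1}P ∉ G(F_{cycl,r}°)`, then there is `σ ∈ Gal(F̄/F_{cycl,r})` such that
`σ(P) − P` (computed in the group law, i.e. componentwise `σ(Pᵢ)/Pᵢ`) is `p^r`-torsion
but not `p^{r−1}`-torsion. -/
theorem stmt_17 (p r : ℕ) (hp : p.Prime) (hr : 1 < r) (n : ℕ)
    (F : Type*) [Field F] [Valued F (WithZero (Multiplicative ℤ))]
    [CompleteSpace F] [CharZero F]
    [IsDiscreteValuationRing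
      ↥((Valued.v : Valuation F (WithZero (Multiplicative ℤ))).valuationSubring)]
    (hres : Valued.v (p : F) < 1)
    (w : Valuation (AlgebraicClosure F) NNReal)
    (hw : ∀ x : F, w (algebraMap F (AlgebraicClosure F) x) < 1 ↔ Valued.v x < 1)
    (P : Fin n → AlgebraicClosure F)
    -- `P` is a point of the formal torus: an `n`-tuple of `1`-units of `F̄°`
    (hP : ∀ i, w (P i) = 1 ∧ w (P i - 1) < 1)
    -- `pᵐ·P ∈ G(F_{cycl,r}°)` for some `m ≥ 0`
    (hdiv : ∃ m : ℕ, ∀ i, (P i) ^ (p ^ m) ∈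
      IntermediateField.adjoin F {x : AlgebraicClosure F | x ^ p ^ r = 1})
    -- but `p^{r-1}·P ∉ G(F_{cycl,r}°)`
    (hnot : ¬ ∀ i, (P i) ^ (p ^ (r - 1)) ∈
      IntermediateField.adjoin F {x : AlgebraicClosure F | x ^ p ^ r = 1}) :
    ∃ σ : AlgebraicClosure F ≃ₐ[↥(IntermediateField.adjoin F
        {x : AlgebraicClosure F | x ^ p ^ r = 1})] AlgebraicClosure F,
      (∀ i, (σ (P i) / P i) ^ p ^ r = 1) ∧
        ¬ ∀ i, (σ (P i) / P i) ^ p ^ (r - 1) = 1 :=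
  stmt_17_general p r hp hr n F w P hP hdiv hnot
end
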